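/- Let (H,R) be quasitriangular, and let R_l = {R¹ f(R²) : f ∈ H*} and R_r = {f(R¹) R² : f ∈ H*}. Then R_l and R_r are finite-dimensional Hopf subalgebras of H, and the map (R_l)^{*cop} → R_r, p ↦ p(R¹)R², is an isomorphism of Hopf algebras. -/

import Mathlib

open scoped TensorProduct

structure QuasiTriangular (k H : Type*) [CommRing k] [Ring H] [HopfAlgebra k H] where
  R : H ⊗[k] H
  Sinv : H →ₗ[k] H
  Sinv_antipode : ∀ h : H, Sinv (HopfAlgebra.antipode (R := k) h) = h
  antipode_Sinv : ∀ h : H, HopfAlgebra.antipode (R := k) (Sinv h) = h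
  comul_fst : (TensorProduct.assoc k H H H)
      ((TensorProduct.map (Coalgebra.comul (R := k)) LinearMap.id) R)
    = (Algebra.TensorProduct.map (AlgHom.id k H) Algebra.TensorProduct.includeRight) R *
      Algebra.TensorProduct.includeRight R
  comul_snd : (TensorProduct.map LinearMap.id (Coalgebra.comul (R := k))) R
    = (Algebra.TensorProduct.map (AlgHom.id k H) Algebra.TensorProduct.includeRight) R *
      (Algebra.TensorProduct.map (AlgHom.id k H) Algebra.TensorProduct.includeLeft) R
  counit_fst : (TensorProduct.lid k H)
      ((TensorProduct.map (Coalgebra.counit (R := k)) LinearMap.id) R) = 1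
  counit_snd : (TensorProduct.rid k H)
      ((TensorProduct.map LinearMap.id (Coalgebra.counit (R := k))) R) = 1
  intertwine : ∀ h : H, (TensorProduct.comm k H H) (Coalgebra.comul (R := k) h) * R
    = R * Coalgebra.comul (R := k) h

variable (k H : Type*) [CommRing k] [Ring H] [HopfAlgebra k H]

/-- `θ f = f(R¹) R²`. -/
noncomputable def qtTheta (Q : QuasiTriangular k H) (f : Module.Dual k H) : H :=
  (TensorProduct.lid k H) ((TensorProduct.map f LinearMap.id) Q.R)

/-- `θ' f = R¹ f(R²)`. -/
noncomputable def qtThetaL (Q : QuasiTriangular k H) (f : Module.Dual k H) : H :=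
  (TensorProduct.rid k H) ((TensorProduct.map LinearMap.id f) Q.R)

/-- `R_l = {R¹ f(R²) : f ∈ H*}`. -/
noncomputable def Rl (Q : QuasiTriangular k H) : Submodule k H :=
  Submodule.span k {x | ∃ f : Module.Dual k H, x = qtThetaL k H Q f}

/-- `R_r = {f(R¹) R² : f ∈ H*}`. -/
noncomputable def Rr (Q : QuasiTriangular k H) : Submodule k H :=
  Submodule.span k {x | ∃ f : Module.Dual k H, x = qtTheta k H Q f}

/-- Convolution product of two elements of `H*`. -/
noncomputable def qtConv (f g : Module.Dual k H) : Module.Dual k H :=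
  (TensorProduct.lid k k).toLinearMap ∘ₗ (TensorProduct.map f g) ∘ₗ Coalgebra.comul (R := k)

/-- A subspace of a Hopf algebra which is a Hopf subalgebra. -/
def IsHopfSubalgebra (S : Submodule k H) : Prop :=
  (1 : H) ∈ S ∧ (∀ x ∈ S, ∀ y ∈ S, x * y ∈ S) ∧
  (∀ x ∈ S, Coalgebra.comul (R := k) x ∈ LinearMap.range (TensorProduct.map S.subtype S.subtype)) ∧
  (∀ x ∈ S, HopfAlgebra.antipode (R := k) x ∈ S)

/-!
Write `R = ∑ uₚ ⊗ wₚ` with the `uₚ` linearly independent, so that `θ f = ∑ f(uₚ) wₚ` and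
`θ' f = ∑ f(wₚ) uₚ` lie in finite-dimensional spans. The axioms `(Δ ⊗ id) R = R₁₃ R₂₃` and
`(id ⊗ Δ) R = R₁₃ R₁₂` make `θ` multiplicative and `θ'` anti-multiplicative for the convolution
product, and give `Δ (θ f) = ∑ f(uₚ u_q) w_q ⊗ wₚ`. Since `(S ⊗ id) R = R⁻¹ = (id ⊗ S⁻¹) R`, we get
`(S ⊗ S) R = R`, so both spans are stable under `S`. Finally the pairing `f (θ' g) = g (θ f)` shows
that `θ f` only sees the restriction of `f` to `R_l` and determines it.
-/

open TensorProduct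

section

variable {k M N : Type*} [Field k] [AddCommGroup M] [Module k M] [AddCommGroup N] [Module k N]

theorem TensorProduct.exists_eq_sum_tmul_with_dual_left (t : M ⊗[k] N) :
    ∃ (n : ℕ) (u : Fin n → M) (w : Fin n → N) (c : Fin n → Module.Dual k M),
      (∀ p q, c p (u q) = if p = q then 1 else 0) ∧ t = ∑ p, u p ⊗ₜ w p := by
  classical
  obtain ⟨M', N', hM', -, ht⟩ :=
    exists_finite_submodule_of_setFinite {t} (Set.finite_singleton t)
  obtain ⟨t', rfl⟩ := ht rfl
  let b := Module.finBasis k M'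
  obtain ⟨w, rfl⟩ := eq_repr_basis_left b t'
  choose c hc using fun p => LinearMap.exists_extend (b.coord p)
  refine ⟨_, fun p => b p, fun p => w p, c, fun p q => ?_, ?_⟩
  · simpa [Finsupp.single_apply, eq_comm] using congr($(hc p) (b q))
  · simp [Finsupp.sum_fintype, map_sum, mapIncl]

theorem TensorProduct.exists_eq_sum_tmul_with_dual_right (t : M ⊗[k] N) :
    ∃ (n : ℕ) (u : Fin n → M) (w : Fin n → N) (d : Fin n → Module.Dual k N),
      (∀ p q, d p (w q) = if p = q then 1 else 0) ∧ t = ∑ p, u p ⊗ₜ w p := by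
  obtain ⟨n, w, u, d, hd, ht⟩ := exists_eq_sum_tmul_with_dual_left (TensorProduct.comm k M N t)
  refine ⟨n, u, w, d, hd, ?_⟩
  rw [← (TensorProduct.comm k M N).symm_apply_apply t, ht, TensorProduct.comm_symm, map_sum]
  rfl

theorem sum_dual_smul_eq_of_mem_span {n : ℕ} {u : Fin n → M} {c : Fin n → Module.Dual k M}
    (hc : ∀ p q, c p (u q) = if p = q then 1 else 0) {x : M}
    (hx : x ∈ Submodule.span k (Set.range u)) : ∑ p, c p x • u p = x := by
  induction hx using Submodule.span_induction with
  | mem x hx => obtain ⟨q, rfl⟩ := hx; simp [hc]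
  | zero => simp
  | add x y _ _ hx hy => simp [add_smul, Finset.sum_add_distrib, hx, hy]
  | smul a x _ hx => simp [mul_smul, ← Finset.smul_sum, hx]

end

open Coalgebra HopfAlgebra

theorem isHopfSubalgebra_span {k H : Type*} [CommRing k] [Ring H] [HopfAlgebra k H] {s : Set H}
    (one_mem : (1 : H) ∈ Submodule.span k s)
    (mul_mem : ∀ x ∈ s, ∀ y ∈ s, x * y ∈ Submodule.span k s)
    (comul_mem : ∀ x ∈ s, comul (R := k) x ∈
      LinearMap.range (map (Submodule.span k s).subtype (Submodule.span k s).subtype))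
    (antipode_mem : ∀ x ∈ s, antipode k x ∈ Submodule.span k s) :
    IsHopfSubalgebra k H (Submodule.span k s) := by
  refine ⟨one_mem, fun x hx y hy => ?_,
    fun x hx => (Submodule.map_span_le _ _ _).mpr comul_mem (Submodule.mem_map_of_mem hx),
    fun x hx => (Submodule.map_span_le _ _ _).mpr antipode_mem (Submodule.mem_map_of_mem hx)⟩
  have : Submodule.span k s * Submodule.span k s ≤ Submodule.span k s := by
    rw [Submodule.span_mul_span, Submodule.span_le]
    rintro _ ⟨x, hx, y, hy, rfl⟩
    exact mul_mem x hx y hy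
  exact this (Submodule.mul_mem_mul hx hy)

namespace QuasiTriangular

variable {k H : Type*} [Field k] [Ring H] [HopfAlgebra k H] (Q : QuasiTriangular k H)

theorem Sinv_one : Q.Sinv 1 = 1 := by
  simpa using Q.Sinv_antipode 1

theorem Sinv_mul (x y : H) : Q.Sinv (x * y) = Q.Sinv y * Q.Sinv x := by
  conv_lhs => rw [← Q.antipode_Sinv x, ← Q.antipode_Sinv y, ← antipode_mul_antidistrib,
    Q.Sinv_antipode]

theorem mul_Sinv_lTensor_comm_comul :
    LinearMap.mul' k H ∘ₗ Q.Sinv.lTensor H ∘ₗ (TensorProduct.comm k H H).toLinearMap ∘ₗ comul =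
      Algebra.linearMap k H ∘ₗ counit := by
  have key : LinearMap.mul' k H ∘ₗ Q.Sinv.lTensor H ∘ₗ (TensorProduct.comm k H H).toLinearMap =
      Q.Sinv ∘ₗ LinearMap.mul' k H ∘ₗ (antipode k).lTensor H := by
    ext x y
    simp [Sinv_mul, Sinv_antipode]
  ext a
  simp only [← LinearMap.comp_assoc, key]
  simp [Algebra.algebraMap_eq_smul_one, Sinv_one]

section SumOfTensors

variable {Q} {n : ℕ} {u w : Fin n → H} (hR : Q.R = ∑ p, u p ⊗ₜ w p)
include hR

theorem qtTheta_eq_sum (f : Module.Dual k H) : qtTheta k H Q f = ∑ p, f (u p) • w p := by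
  simp [qtTheta, hR]

theorem qtThetaL_eq_sum (f : Module.Dual k H) : qtThetaL k H Q f = ∑ p, f (w p) • u p := by
  simp [qtThetaL, hR]

theorem map_comul_id_R_eq_sum :
    map (comul (R := k)) LinearMap.id Q.R = ∑ p, ∑ q, (u p ⊗ₜ u q) ⊗ₜ (w p * w q) := by
  apply (TensorProduct.assoc k H H H).injective
  rw [Q.comul_fst, hR, map_sum, map_sum, Finset.sum_mul_sum]
  simp [Algebra.TensorProduct.tmul_mul_tmul]

theorem map_id_comul_R_eq_sum :
    map LinearMap.id (comul (R := k)) Q.R = ∑ p, ∑ q, (u p * u q) ⊗ₜ (w q ⊗ₜ w p) := by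
  rw [Q.comul_snd, hR, map_sum, map_sum, Finset.sum_mul_sum]
  simp [Algebra.TensorProduct.tmul_mul_tmul]

theorem comul_qtTheta (f : Module.Dual k H) :
    comul (R := k) (qtTheta k H Q f) = ∑ p, ∑ q, f (u p * u q) • (w q ⊗ₜ w p) := by
  have h := congr(TensorProduct.lid k (H ⊗[k] H) (map f LinearMap.id $(map_id_comul_R_eq_sum hR)))
  simpa [hR, qtTheta_eq_sum hR, map_sum] using h

theorem comul_qtThetaL (f : Module.Dual k H) :
    comul (R := k) (qtThetaL k H Q f) = ∑ p, ∑ q, f (w p * w q) • (u p ⊗ₜ u q) := by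
  have h := congr(TensorProduct.rid k (H ⊗[k] H) (map LinearMap.id f $(map_comul_id_R_eq_sum hR)))
  simpa [hR, qtThetaL_eq_sum hR, map_sum] using h

theorem qtTheta_dual {c : Fin n → Module.Dual k H}
    (hc : ∀ p q, c p (u q) = if p = q then 1 else 0) (p : Fin n) : qtTheta k H Q (c p) = w p := by
  simp [qtTheta_eq_sum hR, hc]

theorem qtThetaL_dual {d : Fin n → Module.Dual k H}
    (hd : ∀ p q, d p (w q) = if p = q then 1 else 0) (p : Fin n) :
    qtThetaL k H Q (d p) = u p := by
  simp [qtThetaL_eq_sum hR, hd]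

theorem Rr_le_span : Rr k H Q ≤ Submodule.span k (Set.range w) := by
  refine Submodule.span_le.mpr ?_
  rintro _ ⟨f, rfl⟩
  rw [SetLike.mem_coe, qtTheta_eq_sum hR]
  exact Submodule.sum_mem _ fun p _ => Submodule.smul_mem _ _ (Submodule.subset_span ⟨p, rfl⟩)

theorem Rl_le_span : Rl k H Q ≤ Submodule.span k (Set.range u) := by
  refine Submodule.span_le.mpr ?_
  rintro _ ⟨f, rfl⟩
  rw [SetLike.mem_coe, qtThetaL_eq_sum hR]
  exact Submodule.sum_mem _ fun p _ => Submodule.smul_mem _ _ (Submodule.subset_span ⟨p, rfl⟩)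

end SumOfTensors

theorem qtTheta_qtConv (f g : Module.Dual k H) :
    qtTheta k H Q (qtConv k H f g) = qtTheta k H Q f * qtTheta k H Q g := by
  obtain ⟨n, u, w, -, -, hR⟩ := exists_eq_sum_tmul_with_dual_left Q.R
  have h : qtTheta k H Q (qtConv k H f g) = TensorProduct.lid k H
      (map (TensorProduct.lid k k ∘ₗ map f g) LinearMap.id (map comul LinearMap.id Q.R)) := by
    simp only [qtTheta, qtConv, ← LinearMap.comp_apply, ← map_comp]
    rfl
  rw [h, map_comul_id_R_eq_sum hR, qtTheta_eq_sum hR, qtTheta_eq_sum hR, Finset.sum_mul_sum]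
  simp [map_sum, smul_smul, mul_comm]

theorem qtThetaL_mul (f g : Module.Dual k H) :
    qtThetaL k H Q f * qtThetaL k H Q g = qtThetaL k H Q (qtConv k H g f) := by
  obtain ⟨n, u, w, -, -, hR⟩ := exists_eq_sum_tmul_with_dual_left Q.R
  have h : qtThetaL k H Q (qtConv k H g f) = TensorProduct.rid k H
      (map LinearMap.id (TensorProduct.lid k k ∘ₗ map g f) (map LinearMap.id comul Q.R)) := by
    simp only [qtThetaL, qtConv, ← LinearMap.comp_apply, ← map_comp]
    rfl
  rw [h, map_id_comul_R_eq_sum hR, qtThetaL_eq_sum hR, qtThetaL_eq_sum hR, Finset.sum_mul_sum]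
  simp [map_sum, smul_smul, mul_comm]

theorem apply_qtThetaL (f g : Module.Dual k H) : f (qtThetaL k H Q g) = g (qtTheta k H Q f) := by
  obtain ⟨n, u, w, -, -, hR⟩ := exists_eq_sum_tmul_with_dual_left Q.R
  simp [qtTheta_eq_sum hR, qtThetaL_eq_sum hR, mul_comm]

theorem map_antipode_id_R_mul_R : map (antipode k) LinearMap.id Q.R * Q.R = 1 := by
  obtain ⟨n, u, w, -, -, hR⟩ := exists_eq_sum_tmul_with_dual_left Q.R
  have hε : map counit LinearMap.id Q.R = (1 : k) ⊗ₜ[k] (1 : H) :=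
    (TensorProduct.lid k H).injective (by simpa using Q.counit_fst)
  calc map (antipode k) LinearMap.id Q.R * Q.R
      = map (LinearMap.mul' k H ∘ₗ (antipode k).rTensor H) LinearMap.id
          (map comul LinearMap.id Q.R) := by
        rw [map_comul_id_R_eq_sum hR, hR, map_sum, Finset.sum_mul_sum]
        simp [map_sum, Algebra.TensorProduct.tmul_mul_tmul]
    _ = map (Algebra.linearMap k H) LinearMap.id (map counit LinearMap.id Q.R) := by
        simp only [← LinearMap.comp_apply, ← map_comp, LinearMap.comp_assoc,
          mul_antipode_rTensor_comul]
    _ = 1 := by simp [hε, Algebra.TensorProduct.one_def]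

theorem R_mul_map_id_Sinv_R : Q.R * map LinearMap.id Q.Sinv Q.R = 1 := by
  obtain ⟨n, u, w, -, -, hR⟩ := exists_eq_sum_tmul_with_dual_left Q.R
  have hε : map LinearMap.id counit Q.R = (1 : H) ⊗ₜ[k] (1 : k) :=
    (TensorProduct.rid k H).injective (by simpa using Q.counit_snd)
  calc Q.R * map LinearMap.id Q.Sinv Q.R
      = map LinearMap.id (LinearMap.mul' k H ∘ₗ Q.Sinv.lTensor H ∘ₗ
          (TensorProduct.comm k H H).toLinearMap) (map LinearMap.id comul Q.R) := by
        rw [map_id_comul_R_eq_sum hR, hR, map_sum, Finset.sum_mul_sum]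
        simp [map_sum, Algebra.TensorProduct.tmul_mul_tmul]
    _ = map LinearMap.id (Algebra.linearMap k H) (map LinearMap.id counit Q.R) := by
        simp only [← LinearMap.comp_apply, ← map_comp, LinearMap.comp_assoc,
          mul_Sinv_lTensor_comm_comul]
    _ = 1 := by simp [hε, Algebra.TensorProduct.one_def]

theorem map_antipode_antipode_R : map (antipode k) (antipode k) Q.R = Q.R := by
  have h := left_inv_eq_right_inv Q.map_antipode_id_R_mul_R Q.R_mul_map_id_Sinv_R
  calc map (antipode k) (antipode k) Q.R
      = map LinearMap.id (antipode k) (map (antipode k) LinearMap.id Q.R) := by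
        rw [← LinearMap.comp_apply, ← map_comp]; rfl
    _ = Q.R := by
        rw [h, ← LinearMap.comp_apply, ← map_comp, LinearMap.id_comp,
          show antipode k ∘ₗ Q.Sinv = LinearMap.id from LinearMap.ext Q.antipode_Sinv, map_id]
        rfl

theorem R_eq_sum_antipode_tmul_antipode {n : ℕ} {u w : Fin n → H}
    (hR : Q.R = ∑ p, u p ⊗ₜ w p) : Q.R = ∑ p, antipode k (u p) ⊗ₜ antipode k (w p) := by
  conv_lhs => rw [← Q.map_antipode_antipode_R, hR]
  simp [map_sum]

theorem antipode_qtTheta (f : Module.Dual k H) :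
    antipode k (qtTheta k H Q f) = qtTheta k H Q (f ∘ₗ Q.Sinv) := by
  obtain ⟨n, u, w, -, -, hR⟩ := exists_eq_sum_tmul_with_dual_left Q.R
  rw [qtTheta_eq_sum hR f, qtTheta_eq_sum (Q.R_eq_sum_antipode_tmul_antipode hR)]
  simp [Sinv_antipode]

theorem antipode_qtThetaL (f : Module.Dual k H) :
    antipode k (qtThetaL k H Q f) = qtThetaL k H Q (f ∘ₗ Q.Sinv) := by
  obtain ⟨n, u, w, -, -, hR⟩ := exists_eq_sum_tmul_with_dual_left Q.R
  rw [qtThetaL_eq_sum hR f, qtThetaL_eq_sum (Q.R_eq_sum_antipode_tmul_antipode hR)]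
  simp [Sinv_antipode]

theorem qtTheta_mem_Rr (f : Module.Dual k H) : qtTheta k H Q f ∈ Rr k H Q :=
  Submodule.subset_span ⟨f, rfl⟩

theorem qtThetaL_mem_Rl (f : Module.Dual k H) : qtThetaL k H Q f ∈ Rl k H Q :=
  Submodule.subset_span ⟨f, rfl⟩

theorem isHopfSubalgebra_Rr : IsHopfSubalgebra k H (Rr k H Q) := by
  obtain ⟨n, u, w, c, hc, hR⟩ := exists_eq_sum_tmul_with_dual_left Q.R
  have hw (p : Fin n) : w p ∈ Rr k H Q := qtTheta_dual hR hc p ▸ Q.qtTheta_mem_Rr (c p)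
  apply isHopfSubalgebra_span
  · exact Q.counit_fst ▸ Q.qtTheta_mem_Rr counit
  · rintro _ ⟨f, rfl⟩ _ ⟨g, rfl⟩
    exact Q.qtTheta_qtConv f g ▸ Q.qtTheta_mem_Rr _
  · rintro _ ⟨f, rfl⟩
    rw [comul_qtTheta hR]
    exact Submodule.sum_mem _ fun p _ => Submodule.sum_mem _ fun q _ =>
      Submodule.smul_mem _ _ ⟨⟨w q, hw q⟩ ⊗ₜ ⟨w p, hw p⟩, rfl⟩
  · rintro _ ⟨f, rfl⟩
    exact Q.antipode_qtTheta f ▸ Q.qtTheta_mem_Rr _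

theorem isHopfSubalgebra_Rl : IsHopfSubalgebra k H (Rl k H Q) := by
  obtain ⟨n, u, w, d, hd, hR⟩ := exists_eq_sum_tmul_with_dual_right Q.R
  have hu (p : Fin n) : u p ∈ Rl k H Q := qtThetaL_dual hR hd p ▸ Q.qtThetaL_mem_Rl (d p)
  apply isHopfSubalgebra_span
  · exact Q.counit_snd ▸ Q.qtThetaL_mem_Rl counit
  · rintro _ ⟨f, rfl⟩ _ ⟨g, rfl⟩
    exact Q.qtThetaL_mul f g ▸ Q.qtThetaL_mem_Rl _
  · rintro _ ⟨f, rfl⟩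
    rw [comul_qtThetaL hR]
    exact Submodule.sum_mem _ fun p _ => Submodule.sum_mem _ fun q _ =>
      Submodule.smul_mem _ _ ⟨⟨u p, hu p⟩ ⊗ₜ ⟨u q, hu q⟩, rfl⟩
  · rintro _ ⟨f, rfl⟩
    exact Q.antipode_qtThetaL f ▸ Q.qtThetaL_mem_Rl _

theorem finiteDimensional_Rr : FiniteDimensional k (Rr k H Q) := by
  obtain ⟨n, u, w, -, -, hR⟩ := exists_eq_sum_tmul_with_dual_left Q.R
  have := FiniteDimensional.span_of_finite k (Set.finite_range w)
  exact Submodule.finiteDimensional_of_le (Rr_le_span hR)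

theorem finiteDimensional_Rl : FiniteDimensional k (Rl k H Q) := by
  obtain ⟨n, u, w, -, -, hR⟩ := exists_eq_sum_tmul_with_dual_left Q.R
  have := FiniteDimensional.span_of_finite k (Set.finite_range u)
  exact Submodule.finiteDimensional_of_le (Rl_le_span hR)

theorem counit_qtTheta (f : Module.Dual k H) : counit (R := k) (qtTheta k H Q f) = f 1 :=
  (Q.apply_qtThetaL f counit).symm.trans (congrArg f Q.counit_snd)

theorem qtTheta_eq_qtTheta_iff (f g : Module.Dual k H) :
    qtTheta k H Q f = qtTheta k H Q g ↔ ∀ x ∈ Rl k H Q, f x = g x := by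
  calc qtTheta k H Q f = qtTheta k H Q g
      ↔ ∀ φ : Module.Dual k H, φ (qtTheta k H Q f) = φ (qtTheta k H Q g) :=
        ⟨fun h φ => h ▸ rfl, fun h => Module.eval_apply_injective k (LinearMap.ext h)⟩
    _ ↔ Set.EqOn f g {x | ∃ φ, x = qtThetaL k H Q φ} := by
        simp [Set.EqOn, apply_qtThetaL]
    _ ↔ ∀ x ∈ Rl k H Q, f x = g x := LinearMap.eqOn_span_iff.symm

noncomputable def qtThetaₗ : Module.Dual k H →ₗ[k] H where
  toFun := qtTheta k H Q
  map_add' f g := by simp [qtTheta, map_add_left]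
  map_smul' a f := by simp [qtTheta, map_smul_left]

theorem Rr_eq_range_qtThetaₗ : Rr k H Q = LinearMap.range Q.qtThetaₗ := by
  rw [Rr, ← Submodule.span_eq (LinearMap.range Q.qtThetaₗ)]
  congr 1
  exact Set.ext fun x => exists_congr fun f => eq_comm

theorem exists_comul_qtTheta_eq_sum (f : Module.Dual k H) :
    ∃ (m : ℕ) (g h : Fin m → Module.Dual k H),
      (∀ x ∈ Rl k H Q, ∀ y ∈ Rl k H Q, f (x * y) = ∑ i, h i x * g i y) ∧
      comul (R := k) (qtTheta k H Q f) = ∑ i, qtTheta k H Q (g i) ⊗ₜ qtTheta k H Q (h i) := by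
  obtain ⟨n, u, w, c, hc, hR⟩ := exists_eq_sum_tmul_with_dual_left Q.R
  let e := (finProdFinEquiv (m := n) (n := n)).symm
  let g : Fin n × Fin n → Module.Dual k H := fun pq => f (u pq.1 * u pq.2) • c pq.2
  let h : Fin n × Fin n → Module.Dual k H := fun pq => c pq.1
  refine ⟨n * n, fun i => g (e i), fun i => h (e i), fun x hx y hy => ?_, ?_⟩
  · rw [e.sum_comp (fun pq => h pq x * g pq y), Fintype.sum_prod_type]
    conv_lhs => rw [← sum_dual_smul_eq_of_mem_span hc (Rl_le_span hR hx),
      ← sum_dual_smul_eq_of_mem_span hc (Rl_le_span hR hy)]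
    simp only [g, h, Finset.sum_mul_sum, map_sum, smul_mul_smul_comm, map_smul, smul_eq_mul,
      LinearMap.smul_apply]
    exact Finset.sum_congr rfl fun p _ => Finset.sum_congr rfl fun q _ => by ring
  · rw [comul_qtTheta hR, e.sum_comp (fun pq => qtTheta k H Q (g pq) ⊗ₜ qtTheta k H Q (h pq)),
      Fintype.sum_prod_type]
    simp [g, h, qtTheta_eq_sum hR, hc, TensorProduct.smul_tmul']

end QuasiTriangular

theorem Rl_Rr_hopf_subalgebras_and_iso
    (k H : Type*) [Field k] [Ring H] [HopfAlgebra k H] (Q : QuasiTriangular k H) :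
    -- `R_l` and `R_r` are finite-dimensional Hopf subalgebras
    IsHopfSubalgebra k H (Rl k H Q) ∧ IsHopfSubalgebra k H (Rr k H Q) ∧
    FiniteDimensional k ↥(Rl k H Q) ∧ FiniteDimensional k ↥(Rr k H Q) ∧
    -- θ takes values in R_r and factors through restriction to R_l, bijectively onto R_r
    (∀ f : Module.Dual k H, qtTheta k H Q f ∈ Rr k H Q) ∧
    (∀ f g : Module.Dual k H, (∀ x ∈ Rl k H Q, f x = g x) → qtTheta k H Q f = qtTheta k H Q g) ∧
    (∀ f g : Module.Dual k H, qtTheta k H Q f = qtTheta k H Q g → ∀ x ∈ Rl k H Q, f x = g x) ∧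
    (∀ y ∈ Rr k H Q, ∃ f : Module.Dual k H, qtTheta k H Q f = y) ∧
    -- θ is an algebra map for the convolution product (= multiplication of the dual)
    (∀ f g : Module.Dual k H,
      qtTheta k H Q (qtConv k H f g) = qtTheta k H Q f * qtTheta k H Q g) ∧
    (qtTheta k H Q (Coalgebra.counit (R := k)) = 1) ∧
    -- θ is a coalgebra map onto the *opposite* coalgebra structure of the dual
    (∀ f : Module.Dual k H, Coalgebra.counit (R := k) (qtTheta k H Q f) = f 1) ∧
    (∀ f : Module.Dual k H, ∃ (n : ℕ) (g h : Fin n → Module.Dual k H),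
      (∀ x ∈ Rl k H Q, ∀ y ∈ Rl k H Q, f (x * y) = ∑ i, h i x * g i y) ∧
      Coalgebra.comul (R := k) (qtTheta k H Q f)
        = ∑ i, qtTheta k H Q (g i) ⊗ₜ[k] qtTheta k H Q (h i)) := by
  refine ⟨Q.isHopfSubalgebra_Rl, Q.isHopfSubalgebra_Rr, Q.finiteDimensional_Rl,
    Q.finiteDimensional_Rr, Q.qtTheta_mem_Rr, fun f g => (Q.qtTheta_eq_qtTheta_iff f g).2,
    fun f g => (Q.qtTheta_eq_qtTheta_iff f g).1, fun y hy => ?_, Q.qtTheta_qtConv, Q.counit_fst,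
    Q.counit_qtTheta, Q.exists_comul_qtTheta_eq_sum⟩
  exact (Q.Rr_eq_range_qtThetaₗ ▸ hy : y ∈ LinearMap.range Q.qtThetaₗ)
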